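/- Let 0 < r < ∞ and let κ_r be the unique number in (0,∞) with lim_{k→∞} (1/k) log Σ_{σ∈Ω_k} (μ_h(J_σ) ‖φ'_σ‖^r)^{κ_r/(r+κ_r)} = 0. Then the κ_r-dimensional upper quantization coefficient of order r of μ_h is finite: limsup_{n→∞} n · V_{n,r}(μ_h)^{κ_r/r} < ∞. -/

import Mathlib

open MeasureTheory Filter Metric

noncomputable section

/-- A cookie-cutter system on `J = [0,1]`. -/
structure CookieCutter where
  N : ℕ
  hN : 2 ≤ N
  Jsub : Fin N → Set ℝ
  f : ℝ → ℝ
  φ : Fin N → ℝ → ℝ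
  c : ℝ
  γ : ℝ
  b : ℝ
  B : ℝ
  hJsub_sub : ∀ j, Jsub j ⊆ Set.Icc 0 1
  hJsub_interval : ∀ j, ∃ u v : ℝ, u ≤ v ∧ Jsub j = Set.Icc u v
  hJsub_disj : ∀ i j, i ≠ j → Disjoint (Jsub i) (Jsub j)
  hbij : ∀ j, Set.BijOn f (Jsub j) (Set.Icc 0 1)
  hφ_maps : ∀ j, ∀ x ∈ Set.Icc (0:ℝ) 1, φ j x ∈ Jsub j
  hφ_rinv : ∀ j, ∀ x ∈ Set.Icc (0:ℝ) 1, f (φ j x) = x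
  hφ_linv : ∀ j, ∀ x ∈ Jsub j, φ j (f x) = x
  hfdiff : ∀ j, ∀ x ∈ Jsub j, DifferentiableAt ℝ f x
  hφdiff : ∀ j, ∀ x ∈ Set.Icc (0:ℝ) 1, DifferentiableAt ℝ (φ j) x
  hc : 0 < c
  hγ : γ ∈ Set.Ioc (0:ℝ) 1
  hHolder : ∀ j, ∀ x ∈ Jsub j, ∀ y ∈ Jsub j, |deriv f x - deriv f y| ≤ c * |x - y| ^ γ
  hb : IsGLB ((fun x => |deriv f x|) '' ⋃ j, Jsub j) b
  hB : IsLUB ((fun x => |deriv f x|) '' ⋃ j, Jsub j) B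
  hb1 : 1 < b

namespace CookieCutter

variable (cc : CookieCutter)

/-- `φ_σ = φ_{σ_1} ∘ ⋯ ∘ φ_{σ_n}` for a word `σ`. -/
def wordMap : List (Fin cc.N) → ℝ → ℝ
  | [] => id
  | j :: rest => cc.φ j ∘ wordMap rest

/-- The basic interval `J_σ = φ_σ(J)`. -/
def Jc (σ : List (Fin cc.N)) : Set ℝ := cc.wordMap σ '' Set.Icc 0 1

/-- The diameter `|J_σ|`. -/
def diamJ (σ : List (Fin cc.N)) : ℝ := Metric.diam (cc.Jc σ)

/-- `‖φ'_σ‖ = sup_{x ∈ J} |φ'_σ(x)|`. -/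
def φnorm (σ : List (Fin cc.N)) : ℝ :=
  sSup ((fun x => |deriv (cc.wordMap σ) x|) '' Set.Icc 0 1)

/-- The distortion constant `ξ = exp (c / (b^γ − 1))`. -/
def xi : ℝ := Real.exp (cc.c / (cc.b ^ cc.γ - 1))

/-- The cookie-cutter set `E = ⋂_{n ≥ 1} ⋃_{σ ∈ Ω_n} J_σ`. -/
def E : Set ℝ := ⋂ (n : ℕ) (_ : 1 ≤ n), ⋃ σ : Fin n → Fin cc.N, cc.Jc (List.ofFn σ)

/-- `η = ξ^{9h}`. -/
def eta (h : ℝ) : ℝ := cc.xi ^ ((9:ℝ) * h)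

/-- `L = η³ ξ^{3h}`. -/
def Lconst (h : ℝ) : ℝ := (cc.eta h) ^ 3 * cc.xi ^ ((3:ℝ) * h)

/-- A Gibbs-like measure for the cookie-cutter system: a Borel probability measure
supported on `E` with `η⁻¹|J_σ|^h ≤ μ(J_σ) ≤ η|J_σ|^h` for every word `σ`. -/
def IsGibbsLike (μ : Measure ℝ) (h : ℝ) : Prop :=
  IsProbabilityMeasure μ ∧ μ (cc.Eᶜ) = 0 ∧
    ∀ σ : List (Fin cc.N), σ ≠ [] →
      (cc.eta h)⁻¹ * cc.diamJ σ ^ h ≤ (μ (cc.Jc σ)).toReal ∧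
      (μ (cc.Jc σ)).toReal ≤ cc.eta h * cc.diamJ σ ^ h

/-- A finite maximal antichain in `Ω`. -/
def IsFMA (Γ : Finset (List (Fin cc.N))) : Prop :=
  (∀ σ ∈ Γ, σ ≠ []) ∧
  (∀ ω : ℕ → Fin cc.N, ∃ k : ℕ, 1 ≤ k ∧ (List.ofFn fun i : Fin k => ω i) ∈ Γ) ∧
  ∀ σ ∈ Γ, ∀ τ ∈ Γ, σ <+: τ → σ = τ

end CookieCutter

/-- The `n`-th quantization error of order `r`. -/
def Vnr (μ : Measure ℝ) (n : ℕ) (r : ℝ) : ℝ :=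
  sInf ((fun α : Finset ℝ => ∫ x, Metric.infDist x (α : Set ℝ) ^ r ∂μ) ''
    {α : Finset ℝ | α.Nonempty ∧ α.card ≤ n})

/-- The auxiliary quantization error `u_{n,r}` with `U = (0,1)`. -/
def unr (μ : Measure ℝ) (n : ℕ) (r : ℝ) : ℝ :=
  sInf ((fun α : Finset ℝ =>
      ∫ x, Metric.infDist x ((α : Set ℝ) ∪ (Set.Ioo (0:ℝ) 1)ᶜ) ^ r ∂μ) ''
    {α : Finset ℝ | α.card ≤ n})

/-!
The weights `a_σ = μ(J_σ) ‖φ'_σ‖ ^ r` are quasi-multiplicative, by bounded distortion and the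
Gibbs property. The level sums of `a_σ ^ s`, `s = κ / (r + κ)`, have growth rate `0` by the choice
of `κ`, so Fekete's lemma bounds them above and below. Cutting every word at its first prefix with
`a_σ < ε` gives a prefix antichain of at most `C ε ^ (-s)` cylinders, each of weight `< ε`; one
point in each cylinder quantizes `μ` with error `V_{n,r} ≤ n ε` for `n ≍ ε ^ (-s)`, which is
`n V_{n,r} ^ (κ / r) = O(1)`.
-/

open Topology

lemma Subadditive.nonneg_of_tendsto_div_zero {u : ℕ → ℝ} (hu : Subadditive u)
    (hlim : Tendsto (fun n : ℕ => u n / n) atTop (𝓝 0)) {n : ℕ} (hn : n ≠ 0) : 0 ≤ u n := by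
  have hbdd := hlim.bddBelow_range
  have hlim0 : hu.lim = 0 := tendsto_nhds_unique (hu.tendsto_lim hbdd) hlim
  have := hu.lim_le_div hbdd hn
  rw [hlim0] at this
  have hn' : (0 : ℝ) < n := Nat.cast_pos.2 (Nat.pos_of_ne_zero hn)
  simpa using (le_div_iff₀ hn').1 this

lemma one_le_mul_of_quasiSubmultiplicative {T : ℕ → ℝ} {K : ℝ} (hT : ∀ k, 0 < T k) (hK : 0 < K)
    (hsub : ∀ k l, T (k + l) ≤ K * (T k * T l))
    (hlim : Tendsto (fun k : ℕ => 1 / (k : ℝ) * Real.log (T k)) atTop (𝓝 0)) (k : ℕ) :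
    1 ≤ K * T k := by
  rcases eq_or_ne k 0 with rfl | hk
  · have := hsub 0 0
    rw [add_zero] at this
    nlinarith [hT 0]
  set u : ℕ → ℝ := fun k => Real.log (K * T k)
  have hu : Subadditive u := fun k l => by
    have hKT : ∀ k, 0 < K * T k := fun k => mul_pos hK (hT k)
    calc u (k + l) ≤ Real.log (K * T k * (K * T l)) := by
          refine Real.log_le_log (hKT _) ?_
          nlinarith [hsub k l]
      _ = u k + u l := Real.log_mul (hKT k).ne' (hKT l).ne'
  have hulim : Tendsto (fun n : ℕ => u n / n) atTop (𝓝 0) := by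
    have hlogK : Tendsto (fun n : ℕ => Real.log K / n) atTop (𝓝 0) :=
      tendsto_const_nhds.div_atTop tendsto_natCast_atTop_atTop
    refine (zero_add (0 : ℝ) ▸ hlogK.add hlim).congr fun n => ?_
    simp only [u, Real.log_mul hK.ne' (hT n).ne']
    ring
  simpa [u, Real.log_nonneg_iff (mul_pos hK (hT k))] using hu.nonneg_of_tendsto_div_zero hulim hk

lemma le_of_quasiSupermultiplicative {T : ℕ → ℝ} {K : ℝ} (hT : ∀ k, 0 < T k) (hK : 0 < K)
    (hsup : ∀ k l, T k * T l ≤ K * T (k + l))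
    (hlim : Tendsto (fun k : ℕ => 1 / (k : ℝ) * Real.log (T k)) atTop (𝓝 0)) (k : ℕ) :
    T k ≤ K := by
  have hinv := one_le_mul_of_quasiSubmultiplicative (T := fun k => (T k)⁻¹)
    (fun k => inv_pos.2 (hT k)) hK
    (fun k l => calc
      (T (k + l))⁻¹ ≤ (K⁻¹ * (T k * T l))⁻¹ :=
        inv_anti₀ (by have := hT k; have := hT l; positivity)
          ((inv_mul_le_iff₀ hK).2 (hsup k l))
      _ = K * ((T k)⁻¹ * (T l)⁻¹) := by rw [mul_inv, inv_inv, mul_inv])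
    (by simpa [Real.log_inv] using hlim.neg) k
  rwa [← div_eq_mul_inv, one_le_div (hT k)] at hinv

lemma Vnr_nonneg (μ : Measure ℝ) (n : ℕ) (r : ℝ) : 0 ≤ Vnr μ n r :=
  Real.sInf_nonneg <| Set.forall_mem_image.2 fun _ _ =>
    integral_nonneg fun _ => Real.rpow_nonneg infDist_nonneg r

lemma mul_mul_rpow_eq {x y r κ : ℝ} (hx : 0 ≤ x) (hy : 0 ≤ y) (hr : 0 < r) (hκ : 0 < κ) :
    x * (x * y) ^ (κ / r) = (x * y ^ (κ / (r + κ))) ^ ((r + κ) / r) := by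
  have hrκ : (r + κ) / r = 1 + κ / r := by field_simp
  rw [Real.mul_rpow hx (Real.rpow_nonneg hy _), ← Real.rpow_mul hy, Real.mul_rpow hx hy, hrκ,
    Real.rpow_add' hx (by positivity), Real.rpow_one, ← hrκ]
  field_simp

section Words

open Finset

variable {α : Type*} [Fintype α] [DecidableEq α]

variable (α) in
def wordsOfLength (k : ℕ) : Finset (List α) :=
  (univ : Finset (Fin k → α)).image List.ofFn

@[simp]
lemma mem_wordsOfLength {k : ℕ} {σ : List α} : σ ∈ wordsOfLength α k ↔ σ.length = k := by
  refine ⟨?_, ?_⟩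
  · rintro hσ
    obtain ⟨v, -, rfl⟩ := mem_image.1 hσ
    exact List.length_ofFn
  · rintro rfl
    exact mem_image.2 ⟨σ.get, mem_univ _, List.ofFn_get σ⟩

lemma sum_wordsOfLength {M : Type*} [AddCommMonoid M] (k : ℕ) (g : List α → M) :
    ∑ σ ∈ wordsOfLength α k, g σ = ∑ v : Fin k → α, g (List.ofFn v) :=
  sum_image fun _ _ _ _ h => List.ofFn_injective h

lemma sum_wordsOfLength_add {M : Type*} [AddCommMonoid M] (k l : ℕ) (g : List α → M) :
    ∑ υ ∈ wordsOfLength α (k + l), g υ =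
      ∑ σ ∈ wordsOfLength α k, ∑ τ ∈ wordsOfLength α l, g (σ ++ τ) := by
  simp only [sum_wordsOfLength, ← Fintype.sum_prod_type']
  rw [← (Fin.appendEquiv k l).sum_comp]
  simp [Fin.appendEquiv, List.ofFn_fin_append]

/-- The extensions to length `m` of the words of a prefix antichain are pairwise distinct. -/
lemma sum_sum_append_le_of_antichain {m : ℕ} {Γ : Finset (List α)}
    (hanti : ∀ σ ∈ Γ, ∀ τ ∈ Γ, σ <+: τ → σ = τ) (hlen : ∀ σ ∈ Γ, σ.length ≤ m)
    {g : List α → ℝ} (hg : ∀ υ, 0 ≤ g υ) :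
    ∑ σ ∈ Γ, ∑ τ ∈ wordsOfLength α (m - σ.length), g (σ ++ τ) ≤
      ∑ υ ∈ wordsOfLength α m, g υ := by
  rw [← sum_sigma Γ (fun σ => wordsOfLength α (m - σ.length)) fun x => g (x.1 ++ x.2)]
  have hinj : Set.InjOn (fun x : (_ : List α) × List α => x.1 ++ x.2)
      (Γ.sigma fun σ => wordsOfLength α (m - σ.length)) := by
    rintro ⟨σ, τ⟩ hx ⟨σ', τ'⟩ hy (hxy : σ ++ τ = σ' ++ τ')
    simp only [coe_sigma, Set.mem_sigma_iff, mem_coe] at hx hy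
    obtain rfl : σ = σ' := by
      rcases List.prefix_or_prefix_of_prefix (List.prefix_append σ τ)
        (hxy ▸ List.prefix_append σ' τ') with hp | hp
      · exact hanti σ hx.1 σ' hy.1 hp
      · exact (hanti σ' hy.1 σ hx.1 hp).symm
    rw [List.append_cancel_left hxy]
  rw [← sum_image hinj]
  refine sum_le_sum_of_subset_of_nonneg ?_ fun υ _ _ => hg υ
  intro υ hυ
  obtain ⟨⟨σ, τ⟩, hστ, rfl⟩ := mem_image.1 hυ
  obtain ⟨hσ, hτ⟩ := mem_sigma.1 hστ
  rw [mem_wordsOfLength] at hτ ⊢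
  simp only [List.length_append, hτ]
  have := hlen σ hσ
  omega

end Words

structure IsQuasiMultiplicative {α : Type*} (K : ℝ) (a : List α → ℝ) : Prop where
  le_mul : ∀ σ τ, a (σ ++ τ) ≤ K * (a σ * a τ)
  mul_le : ∀ σ τ, a σ * a τ ≤ K * a (σ ++ τ)

namespace IsQuasiMultiplicative

open Finset

variable {α : Type*} {K : ℝ} {a g : List α → ℝ}

lemma one_le (ha : IsQuasiMultiplicative K a) (hnil : a [] = 1) {σ : List α} (hσ : 0 < a σ) :
    1 ≤ K := by
  have := ha.mul_le [] σ
  rw [hnil, one_mul, List.nil_append] at this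
  exact (le_mul_iff_one_le_left hσ).1 this

lemma rpow (ha : IsQuasiMultiplicative K a) (hK : 0 ≤ K) (ha0 : ∀ σ, 0 ≤ a σ) {s : ℝ}
    (hs : 0 ≤ s) : IsQuasiMultiplicative (K ^ s) fun σ => a σ ^ s where
  le_mul σ τ := by
    rw [← Real.mul_rpow (ha0 σ) (ha0 τ), ← Real.mul_rpow hK (mul_nonneg (ha0 σ) (ha0 τ))]
    exact Real.rpow_le_rpow (ha0 _) (ha.le_mul σ τ) hs
  mul_le σ τ := by
    rw [← Real.mul_rpow (ha0 σ) (ha0 τ), ← Real.mul_rpow hK (ha0 _)]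
    exact Real.rpow_le_rpow (mul_nonneg (ha0 σ) (ha0 τ)) (ha.mul_le σ τ) hs

lemma of_comparable (hg : IsQuasiMultiplicative K g) (hK : 0 ≤ K) (hg0 : ∀ σ, 0 ≤ g σ) {C : ℝ}
    (hC : 0 < C) (hlow : ∀ σ, C⁻¹ * g σ ≤ a σ) (hup : ∀ σ, a σ ≤ C * g σ) :
    IsQuasiMultiplicative (C ^ 3 * K) a := by
  have hlow' : ∀ σ, g σ ≤ C * a σ := fun σ => (inv_mul_le_iff₀ hC).1 (hlow σ)
  have ha0 : ∀ σ, 0 ≤ a σ := fun σ => (mul_nonneg (inv_nonneg.2 hC.le) (hg0 σ)).trans (hlow σ)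
  refine ⟨fun σ τ => ?_, fun σ τ => ?_⟩
  · calc a (σ ++ τ) ≤ C * (K * (g σ * g τ)) :=
          (hup _).trans (mul_le_mul_of_nonneg_left (hg.le_mul σ τ) hC.le)
      _ ≤ C * (K * ((C * a σ) * (C * a τ))) := by
          refine mul_le_mul_of_nonneg_left (mul_le_mul_of_nonneg_left ?_ hK) hC.le
          exact mul_le_mul (hlow' σ) (hlow' τ) (hg0 τ) (mul_nonneg hC.le (ha0 σ))
      _ = C ^ 3 * K * (a σ * a τ) := by ring
  · calc a σ * a τ ≤ (C * g σ) * (C * g τ) := mul_le_mul (hup σ) (hup τ) (ha0 τ) (by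
          have := hg0 σ; positivity)
      _ = C ^ 2 * (g σ * g τ) := by ring
      _ ≤ C ^ 2 * (K * (C * a (σ ++ τ))) := by
          refine mul_le_mul_of_nonneg_left ?_ (sq_nonneg C)
          exact (hg.mul_le σ τ).trans (mul_le_mul_of_nonneg_left (hlow' _) hK)
      _ = C ^ 3 * K * a (σ ++ τ) := by ring

variable [Fintype α] [DecidableEq α]

lemma sum_wordsOfLength_add_le (ha : IsQuasiMultiplicative K a) (k l : ℕ) :
    ∑ υ ∈ wordsOfLength α (k + l), a υ ≤
      K * ((∑ σ ∈ wordsOfLength α k, a σ) * ∑ τ ∈ wordsOfLength α l, a τ) := by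
  rw [sum_wordsOfLength_add, sum_mul_sum, mul_sum]
  exact sum_le_sum fun σ _ => by rw [mul_sum]; exact sum_le_sum fun τ _ => ha.le_mul σ τ

lemma mul_sum_wordsOfLength_le (ha : IsQuasiMultiplicative K a) (k l : ℕ) :
    (∑ σ ∈ wordsOfLength α k, a σ) * ∑ τ ∈ wordsOfLength α l, a τ ≤
      K * ∑ υ ∈ wordsOfLength α (k + l), a υ := by
  rw [sum_wordsOfLength_add, sum_mul_sum, mul_sum]
  exact sum_le_sum fun σ _ => by rw [mul_sum]; exact sum_le_sum fun τ _ => ha.mul_le σ τ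

variable [Nonempty α]

lemma sum_wordsOfLength_bounds (ha : IsQuasiMultiplicative K a) (hpos : ∀ σ, 0 < a σ)
    (hK : 0 < K)
    (hlim : Tendsto (fun k : ℕ => 1 / (k : ℝ) * Real.log (∑ σ ∈ wordsOfLength α k, a σ))
      atTop (𝓝 0)) (k : ℕ) :
    1 ≤ K * ∑ σ ∈ wordsOfLength α k, a σ ∧ ∑ σ ∈ wordsOfLength α k, a σ ≤ K := by
  have hT : ∀ k, 0 < ∑ σ ∈ wordsOfLength α k, a σ := fun k =>
    sum_pos (fun σ _ => hpos σ) ⟨List.replicate k (Classical.arbitrary α), by simp⟩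
  exact ⟨one_le_mul_of_quasiSubmultiplicative hT hK ha.sum_wordsOfLength_add_le hlim k,
    le_of_quasiSupermultiplicative hT hK ha.mul_sum_wordsOfLength_le hlim k⟩

/-- Each `a σ` is comparable to the total weight of its extensions to level `m`. -/
lemma sum_le_of_antichain (ha : IsQuasiMultiplicative K a) (hpos : ∀ σ, 0 < a σ) (hK : 0 < K)
    (hlim : Tendsto (fun k : ℕ => 1 / (k : ℝ) * Real.log (∑ σ ∈ wordsOfLength α k, a σ))
      atTop (𝓝 0))
    {Γ : Finset (List α)} (hanti : ∀ σ ∈ Γ, ∀ τ ∈ Γ, σ <+: τ → σ = τ) {m : ℕ}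
    (hlen : ∀ σ ∈ Γ, σ.length ≤ m) :
    ∑ σ ∈ Γ, a σ ≤ K ^ 3 := by
  have hbounds := ha.sum_wordsOfLength_bounds hpos hK hlim
  have hext : ∀ σ, a σ ≤ K ^ 2 * ∑ τ ∈ wordsOfLength α (m - σ.length), a (σ ++ τ) := fun σ =>
    calc a σ ≤ a σ * (K * ∑ τ ∈ wordsOfLength α (m - σ.length), a τ) :=
          le_mul_of_one_le_right (hpos σ).le (hbounds _).1
      _ = K * ∑ τ ∈ wordsOfLength α (m - σ.length), a σ * a τ := by
          simp only [mul_sum]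
          exact sum_congr rfl fun τ _ => by ring
      _ ≤ K * ∑ τ ∈ wordsOfLength α (m - σ.length), K * a (σ ++ τ) :=
          mul_le_mul_of_nonneg_left (sum_le_sum fun τ _ => ha.mul_le σ τ) hK.le
      _ = K ^ 2 * ∑ τ ∈ wordsOfLength α (m - σ.length), a (σ ++ τ) := by rw [← mul_sum]; ring
  calc ∑ σ ∈ Γ, a σ ≤ K ^ 2 * ∑ σ ∈ Γ, ∑ τ ∈ wordsOfLength α (m - σ.length), a (σ ++ τ) := by
        rw [mul_sum]; exact sum_le_sum fun σ _ => hext σ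
    _ ≤ K ^ 2 * ∑ υ ∈ wordsOfLength α m, a υ := by
        gcongr
        exact sum_sum_append_le_of_antichain hanti hlen fun υ => (hpos υ).le
    _ ≤ K ^ 2 * K := by gcongr; exact (hbounds m).2
    _ = K ^ 3 := by ring

end IsQuasiMultiplicative

section FirstBelow

open Finset

variable {α : Type*} {a : List α → ℝ} {ε : ℝ}

def IsFirstBelow (a : List α → ℝ) (ε : ℝ) (σ : List α) : Prop :=
  a σ < ε ∧ ∀ k < σ.length, ε ≤ a (σ.take k)

lemma IsFirstBelow.eq_of_prefix {σ τ : List α} (hσ : IsFirstBelow a ε σ)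
    (hτ : IsFirstBelow a ε τ) (h : σ <+: τ) : σ = τ := by
  refine h.eq_of_length (le_antisymm h.length_le (not_lt.1 fun hlt => ?_))
  have := hτ.2 σ.length hlt
  rw [← List.prefix_iff_eq_take.1 h] at this
  exact this.not_gt hσ.1

lemma exists_prefix_isFirstBelow {τ : List α} (hτ : a τ < ε) :
    ∃ σ, σ <+: τ ∧ IsFirstBelow a ε σ := by
  classical
  have hex : ∃ k, a (τ.take k) < ε := ⟨τ.length, by rwa [List.take_length]⟩
  refine ⟨τ.take (Nat.find hex), List.take_prefix _ _, Nat.find_spec hex, fun k hk => ?_⟩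
  have hk' : k < Nat.find hex := hk.trans_le (List.length_take_le _ _)
  rw [List.take_take, min_eq_left hk'.le]
  exact not_lt.1 (Nat.find_min hex hk')

lemma IsFirstBelow.ne_nil_and_le_dropLast {σ : List α} (hσ : IsFirstBelow a ε σ)
    (hnil : ε ≤ a []) :
    σ ≠ [] ∧ ε ≤ a σ.dropLast := by
  have hne : σ ≠ [] := by rintro rfl; exact hnil.not_gt hσ.1
  refine ⟨hne, ?_⟩
  rw [List.dropLast_eq_take]
  exact hσ.2 _ (Nat.sub_lt (List.length_pos_iff.2 hne) one_pos)

/-- Dropping the last letter of `σ` changes `a σ` by at most the factor `K / δ`. -/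
lemma IsQuasiMultiplicative.mul_le_of_isFirstBelow {K δ : ℝ} (ha : IsQuasiMultiplicative K a)
    (hδ : 0 ≤ δ) (hletter : ∀ j, δ ≤ a [j]) (hε : 0 ≤ ε) (hnil : ε ≤ a []) {σ : List α}
    (hσ : IsFirstBelow a ε σ) : ε * δ ≤ K * a σ := by
  obtain ⟨hne, hdrop⟩ := hσ.ne_nil_and_le_dropLast hnil
  calc ε * δ ≤ a σ.dropLast * a [σ.getLast hne] :=
        mul_le_mul hdrop (hletter _) hδ (hε.trans hdrop)
    _ ≤ K * a σ := by
        simpa only [List.dropLast_append_getLast hne] using ha.mul_le σ.dropLast [σ.getLast hne]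

variable [Fintype α] [DecidableEq α]

open scoped Classical in
def firstBelowSet (a : List α → ℝ) (ε : ℝ) (m : ℕ) : Finset (List α) :=
  ((range (m + 1)).biUnion (wordsOfLength α)).filter (IsFirstBelow a ε)

lemma mem_firstBelowSet {m : ℕ} {σ : List α} :
    σ ∈ firstBelowSet a ε m ↔ σ.length ≤ m ∧ IsFirstBelow a ε σ := by
  simp [firstBelowSet]

lemma exists_prefix_mem_firstBelowSet {m : ℕ} {τ : List α} (hτ : τ.length = m) (hlt : a τ < ε) :
    ∃ σ ∈ firstBelowSet a ε m, σ <+: τ := by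
  obtain ⟨σ, hpre, hσ⟩ := exists_prefix_isFirstBelow hlt
  exact ⟨σ, mem_firstBelowSet.2 ⟨hτ ▸ hpre.length_le, hσ⟩, hpre⟩

theorem IsQuasiMultiplicative.exists_card_firstBelowSet_mul_rpow_le [Nonempty α] {K s : ℝ}
    (ha : IsQuasiMultiplicative K a) (hpos : ∀ σ, 0 < a σ) (hnil : a [] = 1) (hs : 0 < s)
    (hlim : Tendsto (fun k : ℕ => 1 / (k : ℝ) * Real.log (∑ v : Fin k → α, a (List.ofFn v) ^ s))
      atTop (𝓝 0)) :
    ∃ C, ∀ ε ∈ Set.Ioc (0 : ℝ) 1, ∀ m, ((firstBelowSet a ε m).card : ℝ) * ε ^ s ≤ C := by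
  have hK : 1 ≤ K := ha.one_le hnil (hpos [])
  have hK0 : 0 < K := one_pos.trans_le hK
  obtain ⟨j₀, hj₀⟩ := Finite.exists_min fun j : α => a [j]
  set δ := a [j₀]
  have hδ : 0 < δ := hpos _
  have has := ha.rpow hK0.le (fun σ => (hpos σ).le) hs.le
  have hKs : 0 < K ^ s := Real.rpow_pos_of_pos hK0 s
  refine ⟨(K ^ s) ^ 3 / (δ / K) ^ s, fun ε ⟨hε, hε1⟩ m => ?_⟩
  set Γ := firstBelowSet a ε m
  have hlow : ∀ σ ∈ Γ, (δ / K) ^ s * ε ^ s ≤ a σ ^ s := fun σ hσ => by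
    have := ha.mul_le_of_isFirstBelow hδ.le hj₀ hε.le (hnil ▸ hε1) (mem_firstBelowSet.1 hσ).2
    rw [← Real.mul_rpow (by positivity) hε.le]
    refine Real.rpow_le_rpow (by positivity) ?_ hs.le
    rw [div_mul_eq_mul_div, div_le_iff₀ hK0]
    linarith
  have hsum : ∑ σ ∈ Γ, a σ ^ s ≤ (K ^ s) ^ 3 :=
    has.sum_le_of_antichain (fun σ => Real.rpow_pos_of_pos (hpos σ) s) hKs
      (by simpa only [sum_wordsOfLength] using hlim)
      (fun σ hσ τ hτ => (mem_firstBelowSet.1 hσ).2.eq_of_prefix (mem_firstBelowSet.1 hτ).2)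
      (fun σ hσ => (mem_firstBelowSet.1 hσ).1)
  rw [le_div_iff₀ (by positivity), mul_assoc, mul_comm (ε ^ s)]
  calc (Γ.card : ℝ) * ((δ / K) ^ s * ε ^ s) ≤ ∑ σ ∈ Γ, a σ ^ s := by
        simpa using card_nsmul_le_sum Γ (fun σ => a σ ^ s) _ hlow
    _ ≤ (K ^ s) ^ 3 := hsum

end FirstBelow

namespace CookieCutter

open Set

variable {cc : CookieCutter}

lemma b_pos : 0 < cc.b := one_pos.trans cc.hb1

lemma deriv_f_mul_deriv_φ (j : Fin cc.N) {x : ℝ} (hx : x ∈ Icc (0 : ℝ) 1) :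
    deriv cc.f (cc.φ j x) * deriv (cc.φ j) x = 1 := by
  have hcomp : HasDerivAt (cc.f ∘ cc.φ j) (deriv cc.f (cc.φ j x) * deriv (cc.φ j) x) x :=
    (cc.hfdiff j _ (cc.hφ_maps j x hx)).hasDerivAt.comp x (cc.hφdiff j x hx).hasDerivAt
  have hid : HasDerivWithinAt (cc.f ∘ cc.φ j) 1 (Icc 0 1) x :=
    (hasDerivAt_id x).hasDerivWithinAt.congr (fun y hy => cc.hφ_rinv j y hy) (cc.hφ_rinv j x hx)
  exact (uniqueDiffOn_Icc_zero_one x hx).eq_deriv _ hcomp.hasDerivWithinAt hid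

lemma abs_deriv_φ (j : Fin cc.N) {x : ℝ} (hx : x ∈ Icc (0 : ℝ) 1) :
    |deriv (cc.φ j) x| = |deriv cc.f (cc.φ j x)|⁻¹ := by
  rw [← abs_inv, eq_inv_of_mul_eq_one_right (deriv_f_mul_deriv_φ j hx)]

lemma b_le_abs_deriv_f_φ (j : Fin cc.N) {x : ℝ} (hx : x ∈ Icc (0 : ℝ) 1) :
    cc.b ≤ |deriv cc.f (cc.φ j x)| :=
  cc.hb.1 ⟨_, mem_iUnion.2 ⟨j, cc.hφ_maps j x hx⟩, rfl⟩

lemma abs_deriv_φ_le (j : Fin cc.N) {x : ℝ} (hx : x ∈ Icc (0 : ℝ) 1) :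
    |deriv (cc.φ j) x| ≤ cc.b⁻¹ := by
  rw [abs_deriv_φ j hx]
  exact inv_anti₀ b_pos (b_le_abs_deriv_f_φ j hx)

lemma deriv_φ_ne_zero (j : Fin cc.N) {x : ℝ} (hx : x ∈ Icc (0 : ℝ) 1) :
    deriv (cc.φ j) x ≠ 0 :=
  right_ne_zero_of_mul_eq_one (deriv_f_mul_deriv_φ j hx)

lemma wordMap_mem_Icc (σ : List (Fin cc.N)) {x : ℝ} (hx : x ∈ Icc (0 : ℝ) 1) :
    cc.wordMap σ x ∈ Icc (0 : ℝ) 1 := by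
  induction σ with
  | nil => exact hx
  | cons j ρ ih => exact cc.hJsub_sub j (cc.hφ_maps j _ ih)

lemma wordMap_append (σ τ : List (Fin cc.N)) :
    cc.wordMap (σ ++ τ) = cc.wordMap σ ∘ cc.wordMap τ := by
  induction σ with
  | nil => rfl
  | cons j ρ ih => simp only [List.cons_append, wordMap, ih, Function.comp_assoc]

lemma differentiableAt_wordMap (σ : List (Fin cc.N)) {x : ℝ} (hx : x ∈ Icc (0 : ℝ) 1) :
    DifferentiableAt ℝ (cc.wordMap σ) x := by
  induction σ with
  | nil => exact differentiableAt_id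
  | cons j ρ ih => exact (cc.hφdiff j _ (wordMap_mem_Icc ρ hx)).comp x ih

lemma deriv_wordMap_append (σ τ : List (Fin cc.N)) {x : ℝ} (hx : x ∈ Icc (0 : ℝ) 1) :
    deriv (cc.wordMap (σ ++ τ)) x =
      deriv (cc.wordMap σ) (cc.wordMap τ x) * deriv (cc.wordMap τ) x := by
  rw [wordMap_append]
  exact deriv_comp x (differentiableAt_wordMap σ (wordMap_mem_Icc τ hx))
    (differentiableAt_wordMap τ hx)

lemma deriv_wordMap_cons (j : Fin cc.N) (ρ : List (Fin cc.N)) {x : ℝ} (hx : x ∈ Icc (0 : ℝ) 1) :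
    deriv (cc.wordMap (j :: ρ)) x = deriv (cc.φ j) (cc.wordMap ρ x) * deriv (cc.wordMap ρ) x :=
  deriv_wordMap_append [j] ρ hx

lemma deriv_wordMap_ne_zero (σ : List (Fin cc.N)) {x : ℝ} (hx : x ∈ Icc (0 : ℝ) 1) :
    deriv (cc.wordMap σ) x ≠ 0 := by
  induction σ with
  | nil => simp [wordMap]
  | cons j ρ ih =>
    rw [deriv_wordMap_cons j ρ hx]
    exact mul_ne_zero (deriv_φ_ne_zero j (wordMap_mem_Icc ρ hx)) ih

lemma abs_deriv_wordMap_le (σ : List (Fin cc.N)) {x : ℝ} (hx : x ∈ Icc (0 : ℝ) 1) :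
    |deriv (cc.wordMap σ) x| ≤ cc.b⁻¹ ^ σ.length := by
  induction σ with
  | nil => simp [wordMap]
  | cons j ρ ih =>
    rw [deriv_wordMap_cons j ρ hx, abs_mul, List.length_cons, pow_succ']
    exact mul_le_mul (abs_deriv_φ_le j (wordMap_mem_Icc ρ hx)) ih (abs_nonneg _)
      (inv_nonneg.2 b_pos.le)

lemma abs_wordMap_sub_le (σ : List (Fin cc.N)) {x y : ℝ} (hx : x ∈ Icc (0 : ℝ) 1)
    (hy : y ∈ Icc (0 : ℝ) 1) :
    |cc.wordMap σ x - cc.wordMap σ y| ≤ cc.b⁻¹ ^ σ.length * |x - y| :=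
  (convex_Icc 0 1).norm_image_sub_le_of_norm_deriv_le (fun _ hz => differentiableAt_wordMap σ hz)
    (fun _ hz => abs_deriv_wordMap_le σ hz) hy hx

lemma log_abs_deriv_φ_sub_le (j : Fin cc.N) {x y : ℝ} (hx : x ∈ Icc (0 : ℝ) 1)
    (hy : y ∈ Icc (0 : ℝ) 1) :
    Real.log |deriv (cc.φ j) x| - Real.log |deriv (cc.φ j) y| ≤
      cc.c * |cc.φ j x - cc.φ j y| ^ cc.γ := by
  set U := |deriv cc.f (cc.φ j x)|
  set V := |deriv cc.f (cc.φ j y)|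
  have hU : 1 ≤ U := cc.hb1.le.trans (b_le_abs_deriv_f_φ j hx)
  have hV : 0 < V := b_pos.trans_le (b_le_abs_deriv_f_φ j hy)
  rw [abs_deriv_φ j hx, abs_deriv_φ j hy, Real.log_inv, Real.log_inv, neg_sub_neg,
    ← Real.log_div hV.ne' (by positivity)]
  calc Real.log (V / U) ≤ V / U - 1 := Real.log_le_sub_one_of_pos (by positivity)
    _ = (V - U) / U := by field_simp
    _ ≤ |V - U| := div_le_of_le_mul₀ (by positivity) (abs_nonneg _)
          ((le_abs_self _).trans (le_mul_of_one_le_right (abs_nonneg _) hU))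
    _ ≤ |deriv cc.f (cc.φ j y) - deriv cc.f (cc.φ j x)| := abs_abs_sub_abs_le_abs_sub _ _
    _ ≤ cc.c * |cc.φ j y - cc.φ j x| ^ cc.γ :=
        cc.hHolder j _ (cc.hφ_maps j y hy) _ (cc.hφ_maps j x hx)
    _ = cc.c * |cc.φ j x - cc.φ j y| ^ cc.γ := by rw [abs_sub_comm]

/-- Summing the one-step estimates along the orbit, the `j`-th term is at most `c q ^ (j + 1)`
with `q = b ^ (-γ)`, a geometric series. -/
lemma log_abs_deriv_wordMap_sub_le (σ : List (Fin cc.N)) {x y : ℝ} (hx : x ∈ Icc (0 : ℝ) 1)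
    (hy : y ∈ Icc (0 : ℝ) 1) :
    Real.log |deriv (cc.wordMap σ) x| - Real.log |deriv (cc.wordMap σ) y| ≤
      cc.c * (cc.b ^ cc.γ)⁻¹ / (1 - (cc.b ^ cc.γ)⁻¹) * (1 - (cc.b ^ cc.γ)⁻¹ ^ σ.length) := by
  have hb := b_pos (cc := cc)
  set q := (cc.b ^ cc.γ)⁻¹
  have hq1 : q < 1 := inv_lt_one_of_one_lt₀ (Real.one_lt_rpow cc.hb1 cc.hγ.1)
  induction σ with
  | nil => simp [wordMap]
  | cons j ρ ih =>
    have hρx := wordMap_mem_Icc ρ hx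
    have hρy := wordMap_mem_Icc ρ hy
    have hstep :
        |cc.φ j (cc.wordMap ρ x) - cc.φ j (cc.wordMap ρ y)| ^ cc.γ ≤ q ^ (ρ.length + 1) := by
      have hdist : |cc.wordMap (j :: ρ) x - cc.wordMap (j :: ρ) y| ≤ cc.b⁻¹ ^ (ρ.length + 1) :=
        (abs_wordMap_sub_le (j :: ρ) hx hy).trans (mul_le_of_le_one_right (by positivity)
          (abs_sub_le_iff.2 ⟨by linarith [hx.2, hy.1], by linarith [hx.1, hy.2]⟩))
      calc _ ≤ (cc.b⁻¹ ^ (ρ.length + 1)) ^ cc.γ :=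
            Real.rpow_le_rpow (abs_nonneg _) hdist cc.hγ.1.le
        _ = q ^ (ρ.length + 1) := by
            rw [inv_pow, Real.inv_rpow (by positivity), ← Real.rpow_natCast,
              ← Real.rpow_mul hb.le, mul_comm, Real.rpow_mul hb.le, Real.rpow_natCast, inv_pow]
    rw [deriv_wordMap_cons j ρ hx, deriv_wordMap_cons j ρ hy, abs_mul, abs_mul,
      Real.log_mul (abs_ne_zero.2 (deriv_φ_ne_zero j hρx))
        (abs_ne_zero.2 (deriv_wordMap_ne_zero ρ hx)),
      Real.log_mul (abs_ne_zero.2 (deriv_φ_ne_zero j hρy))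
        (abs_ne_zero.2 (deriv_wordMap_ne_zero ρ hy))]
    have h1 := log_abs_deriv_φ_sub_le j hρx hρy
    have h2 : cc.c * q / (1 - q) * (1 - q ^ ρ.length) + cc.c * q ^ (ρ.length + 1) =
        cc.c * q / (1 - q) * (1 - q ^ (j :: ρ).length) := by
      rw [List.length_cons]
      field_simp [(sub_pos.2 hq1).ne']
      ring
    nlinarith [mul_le_mul_of_nonneg_left hstep cc.hc.le]

lemma c_mul_div_eq_log_xi :
    cc.c * (cc.b ^ cc.γ)⁻¹ / (1 - (cc.b ^ cc.γ)⁻¹) = Real.log cc.xi := by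
  have hbγ : 1 < cc.b ^ cc.γ := Real.one_lt_rpow cc.hb1 cc.hγ.1
  rw [xi, Real.log_exp]
  field_simp [(sub_pos.2 hbγ).ne']

lemma one_le_xi : 1 ≤ cc.xi :=
  Real.one_le_exp (div_nonneg cc.hc.le (sub_nonneg.2 (Real.one_lt_rpow cc.hb1 cc.hγ.1).le))

lemma xi_pos : 0 < cc.xi := Real.exp_pos _

lemma eta_pos (h : ℝ) : 0 < cc.eta h := Real.rpow_pos_of_pos xi_pos _

lemma abs_deriv_wordMap_le_xi_mul (σ : List (Fin cc.N)) {x y : ℝ} (hx : x ∈ Icc (0 : ℝ) 1)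
    (hy : y ∈ Icc (0 : ℝ) 1) :
    |deriv (cc.wordMap σ) x| ≤ cc.xi * |deriv (cc.wordMap σ) y| := by
  have hpos : ∀ z ∈ Icc (0 : ℝ) 1, 0 < |deriv (cc.wordMap σ) z| := fun z hz =>
    abs_pos.2 (deriv_wordMap_ne_zero σ hz)
  have hq : 0 ≤ (cc.b ^ cc.γ)⁻¹ ^ σ.length := by have := b_pos (cc := cc); positivity
  have hlog := log_abs_deriv_wordMap_sub_le σ hx hy
  rw [c_mul_div_eq_log_xi] at hlog
  rw [← Real.log_le_log_iff (hpos x hx) (mul_pos xi_pos (hpos y hy)),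
    Real.log_mul xi_pos.ne' (hpos y hy).ne']
  nlinarith [Real.log_nonneg (one_le_xi (cc := cc))]

lemma bddAbove_abs_deriv_wordMap (σ : List (Fin cc.N)) :
    BddAbove ((fun x => |deriv (cc.wordMap σ) x|) '' Icc 0 1) :=
  ⟨_, forall_mem_image.2 fun _ hx => abs_deriv_wordMap_le σ hx⟩

lemma abs_deriv_wordMap_le_φnorm (σ : List (Fin cc.N)) {x : ℝ} (hx : x ∈ Icc (0 : ℝ) 1) :
    |deriv (cc.wordMap σ) x| ≤ cc.φnorm σ :=
  le_csSup (bddAbove_abs_deriv_wordMap σ) (mem_image_of_mem _ hx)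

lemma φnorm_le {σ : List (Fin cc.N)} {C : ℝ}
    (h : ∀ x ∈ Icc (0 : ℝ) 1, |deriv (cc.wordMap σ) x| ≤ C) : cc.φnorm σ ≤ C :=
  csSup_le ((nonempty_Icc.2 zero_le_one).image _) (forall_mem_image.2 h)

lemma φnorm_pos (σ : List (Fin cc.N)) : 0 < cc.φnorm σ :=
  (abs_pos.2 (deriv_wordMap_ne_zero σ (left_mem_Icc.2 zero_le_one))).trans_le
    (abs_deriv_wordMap_le_φnorm σ (left_mem_Icc.2 zero_le_one))

lemma φnorm_le_pow (σ : List (Fin cc.N)) : cc.φnorm σ ≤ cc.b⁻¹ ^ σ.length :=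
  φnorm_le fun _ hx => abs_deriv_wordMap_le σ hx

lemma φnorm_le_xi_mul (σ : List (Fin cc.N)) {x : ℝ} (hx : x ∈ Icc (0 : ℝ) 1) :
    cc.φnorm σ ≤ cc.xi * |deriv (cc.wordMap σ) x| :=
  φnorm_le fun _ hy => abs_deriv_wordMap_le_xi_mul σ hy hx

lemma φnorm_nil : cc.φnorm [] = 1 :=
  le_antisymm ((φnorm_le_pow []).trans_eq (pow_zero _))
    (by simpa [wordMap] using abs_deriv_wordMap_le_φnorm [] (left_mem_Icc.2 zero_le_one))

lemma isQuasiMultiplicative_φnorm : IsQuasiMultiplicative (cc.xi ^ 2) cc.φnorm where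
  le_mul σ τ := by
    refine le_trans (φnorm_le fun x hx => ?_) (le_mul_of_one_le_left (by
      have := φnorm_pos σ; have := φnorm_pos τ; positivity) (one_le_pow₀ one_le_xi))
    rw [deriv_wordMap_append σ τ hx, abs_mul]
    exact mul_le_mul (abs_deriv_wordMap_le_φnorm σ (wordMap_mem_Icc τ hx))
      (abs_deriv_wordMap_le_φnorm τ hx) (abs_nonneg _) (φnorm_pos σ).le
  mul_le σ τ := by
    have h0 : (0 : ℝ) ∈ Icc (0 : ℝ) 1 := left_mem_Icc.2 zero_le_one
    calc cc.φnorm σ * cc.φnorm τ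
        ≤ (cc.xi * |deriv (cc.wordMap σ) (cc.wordMap τ 0)|) * (cc.xi * |deriv (cc.wordMap τ) 0|) :=
          mul_le_mul (φnorm_le_xi_mul σ (wordMap_mem_Icc τ h0)) (φnorm_le_xi_mul τ h0)
            (φnorm_pos τ).le (mul_nonneg xi_pos.le (abs_nonneg _))
      _ = cc.xi ^ 2 * |deriv (cc.wordMap (σ ++ τ)) 0| := by
          rw [deriv_wordMap_append σ τ h0, abs_mul]; ring
      _ ≤ cc.xi ^ 2 * cc.φnorm (σ ++ τ) :=
          mul_le_mul_of_nonneg_left (abs_deriv_wordMap_le_φnorm _ h0) (by positivity)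

lemma isCompact_Jc (σ : List (Fin cc.N)) : IsCompact (cc.Jc σ) :=
  isCompact_Icc.image_of_continuousOn fun _ hx =>
    (differentiableAt_wordMap σ hx).continuousAt.continuousWithinAt

lemma diamJ_le_φnorm (σ : List (Fin cc.N)) : cc.diamJ σ ≤ cc.φnorm σ := by
  refine diam_le_of_forall_dist_le (φnorm_pos σ).le ?_
  rintro _ ⟨x, hx, rfl⟩ _ ⟨y, hy, rfl⟩
  calc dist (cc.wordMap σ x) (cc.wordMap σ y) ≤ cc.φnorm σ * ‖x - y‖ :=
        (convex_Icc 0 1).norm_image_sub_le_of_norm_deriv_le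
          (fun _ hz => differentiableAt_wordMap σ hz)
          (fun _ hz => abs_deriv_wordMap_le_φnorm σ hz) hy hx
    _ ≤ cc.φnorm σ := mul_le_of_le_one_right (φnorm_pos σ).le
          (abs_sub_le_iff.2 ⟨by linarith [hx.2, hy.1], by linarith [hx.1, hy.2]⟩)

lemma φnorm_le_xi_mul_diamJ (σ : List (Fin cc.N)) : cc.φnorm σ ≤ cc.xi * cc.diamJ σ := by
  obtain ⟨ζ, hζ, hslope⟩ := exists_deriv_eq_slope (cc.wordMap σ) zero_lt_one
    (fun _ hx => (differentiableAt_wordMap σ hx).continuousAt.continuousWithinAt)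
    (fun _ hx => (differentiableAt_wordMap σ (Ioo_subset_Icc_self hx)).differentiableWithinAt)
  calc cc.φnorm σ ≤ cc.xi * |deriv (cc.wordMap σ) ζ| := φnorm_le_xi_mul σ (Ioo_subset_Icc_self hζ)
    _ = cc.xi * dist (cc.wordMap σ 1) (cc.wordMap σ 0) := by
        rw [hslope, Real.dist_eq, sub_zero, div_one]
    _ ≤ cc.xi * cc.diamJ σ := mul_le_mul_of_nonneg_left
        (dist_le_diam_of_mem (isCompact_Jc σ).isBounded
          (mem_image_of_mem _ (right_mem_Icc.2 zero_le_one))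
          (mem_image_of_mem _ (left_mem_Icc.2 zero_le_one))) xi_pos.le

lemma Jc_nil : cc.Jc [] = Icc 0 1 := image_id _

lemma Jc_subset_of_prefix {σ τ : List (Fin cc.N)} (h : σ <+: τ) : cc.Jc τ ⊆ cc.Jc σ := by
  obtain ⟨ρ, rfl⟩ := h
  rintro _ ⟨x, hx, rfl⟩
  rw [wordMap_append]
  exact mem_image_of_mem _ (wordMap_mem_Icc ρ hx)

lemma E_subset_iUnion_Jc {m : ℕ} (hm : 1 ≤ m) :
    cc.E ⊆ ⋃ τ ∈ wordsOfLength (Fin cc.N) m, cc.Jc τ := by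
  intro x hx
  obtain ⟨v, hv⟩ := mem_iUnion.1 (mem_iInter₂.1 hx m hm)
  exact mem_biUnion (mem_wordsOfLength.2 List.length_ofFn) hv

lemma E_subset_Icc : cc.E ⊆ Icc 0 1 := fun _ hx => by
  obtain ⟨τ, -, hτ⟩ := mem_iUnion₂.1 (E_subset_iUnion_Jc le_rfl hx)
  exact Jc_nil (cc := cc) ▸ Jc_subset_of_prefix List.nil_prefix hτ

/-- The weight `a_σ = μ(J_σ) ‖φ'_σ‖^r` whose level sums define `κ_r`. -/
def weight (cc : CookieCutter) (μ : Measure ℝ) (r : ℝ) (σ : List (Fin cc.N)) : ℝ :=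
  (μ (cc.Jc σ)).toReal * cc.φnorm σ ^ r

variable {μ : Measure ℝ} {h r : ℝ}

namespace IsGibbsLike

lemma measure_Icc (hμ : cc.IsGibbsLike μ h) : μ (Icc (0 : ℝ) 1) = 1 :=
  haveI := hμ.1
  (prob_compl_eq_zero_iff measurableSet_Icc).1
    (measure_mono_null (compl_subset_compl.2 E_subset_Icc) hμ.2.1)

lemma weight_nil (hμ : cc.IsGibbsLike μ h) : cc.weight μ r [] = 1 := by
  simp [weight, Jc_nil, hμ.measure_Icc, φnorm_nil]

lemma measure_Jc_le (hμ : cc.IsGibbsLike μ h) (hh : 0 ≤ h) {σ : List (Fin cc.N)} (hσ : σ ≠ []) :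
    (μ (cc.Jc σ)).toReal ≤ cc.eta h * cc.xi ^ h * cc.φnorm σ ^ h :=
  calc (μ (cc.Jc σ)).toReal ≤ cc.eta h * cc.diamJ σ ^ h := (hμ.2.2 σ hσ).2
    _ ≤ cc.eta h * cc.φnorm σ ^ h := by
        gcongr
        exacts [(eta_pos h).le, diam_nonneg, diamJ_le_φnorm σ]
    _ ≤ cc.eta h * cc.xi ^ h * cc.φnorm σ ^ h := by
        rw [mul_right_comm]
        exact le_mul_of_one_le_right
          (mul_nonneg (eta_pos h).le (Real.rpow_nonneg (φnorm_pos σ).le _))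
          (Real.one_le_rpow one_le_xi hh)

lemma le_measure_Jc (hμ : cc.IsGibbsLike μ h) (hh : 0 ≤ h) {σ : List (Fin cc.N)} (hσ : σ ≠ []) :
    (cc.eta h * cc.xi ^ h)⁻¹ * cc.φnorm σ ^ h ≤ (μ (cc.Jc σ)).toReal :=
  calc (cc.eta h * cc.xi ^ h)⁻¹ * cc.φnorm σ ^ h = (cc.eta h)⁻¹ * (cc.xi⁻¹ * cc.φnorm σ) ^ h := by
        rw [mul_inv, Real.mul_rpow (inv_nonneg.2 xi_pos.le) (φnorm_pos σ).le,
          Real.inv_rpow xi_pos.le, mul_assoc]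
    _ ≤ (cc.eta h)⁻¹ * cc.diamJ σ ^ h := by
        gcongr
        · exact inv_nonneg.2 (Real.rpow_nonneg xi_pos.le _)
        · exact mul_nonneg (inv_nonneg.2 xi_pos.le) (φnorm_pos σ).le
        · exact (inv_mul_le_iff₀ xi_pos).2 (φnorm_le_xi_mul_diamJ σ)
    _ ≤ (μ (cc.Jc σ)).toReal := (hμ.2.2 σ hσ).1

lemma weight_comparable (hμ : cc.IsGibbsLike μ h) (hh : 0 ≤ h) (σ : List (Fin cc.N)) :
    (cc.eta h * cc.xi ^ h)⁻¹ * cc.φnorm σ ^ (h + r) ≤ cc.weight μ r σ ∧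
      cc.weight μ r σ ≤ cc.eta h * cc.xi ^ h * cc.φnorm σ ^ (h + r) := by
  have hC : 1 ≤ cc.eta h * cc.xi ^ h :=
    one_le_mul_of_one_le_of_one_le (Real.one_le_rpow one_le_xi (by positivity))
      (Real.one_le_rpow one_le_xi hh)
  rcases eq_or_ne σ [] with rfl | hσ
  · rw [hμ.weight_nil, φnorm_nil, Real.one_rpow, mul_one, mul_one]
    exact ⟨inv_le_one_of_one_le₀ hC, hC⟩
  rw [weight, Real.rpow_add (φnorm_pos σ), ← mul_assoc, ← mul_assoc]
  have hφr := Real.rpow_nonneg (φnorm_pos σ).le r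
  exact ⟨mul_le_mul_of_nonneg_right (hμ.le_measure_Jc hh hσ) hφr,
    mul_le_mul_of_nonneg_right (hμ.measure_Jc_le hh hσ) hφr⟩

lemma weight_pos (hμ : cc.IsGibbsLike μ h) (hh : 0 ≤ h) (σ : List (Fin cc.N)) :
    0 < cc.weight μ r σ :=
  (mul_pos (inv_pos.2 (mul_pos (eta_pos h) (Real.rpow_pos_of_pos xi_pos h)))
    (Real.rpow_pos_of_pos (φnorm_pos σ) _)).trans_le (hμ.weight_comparable hh σ).1

lemma isQuasiMultiplicative_weight (hμ : cc.IsGibbsLike μ h) (hh : 0 ≤ h) (hr : 0 ≤ r) :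
    IsQuasiMultiplicative ((cc.eta h * cc.xi ^ h) ^ 3 * (cc.xi ^ 2) ^ (h + r)) (cc.weight μ r) :=
  (isQuasiMultiplicative_φnorm.rpow (by positivity) (fun σ => (φnorm_pos σ).le)
    (by positivity : 0 ≤ h + r)).of_comparable (by positivity)
    (fun σ => Real.rpow_nonneg (φnorm_pos σ).le _)
    (mul_pos (eta_pos h) (Real.rpow_pos_of_pos xi_pos h))
    (fun σ => (hμ.weight_comparable hh σ).1) (fun σ => (hμ.weight_comparable hh σ).2)

lemma weight_le (hμ : cc.IsGibbsLike μ h) (hr : 0 ≤ r) (σ : List (Fin cc.N)) :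
    cc.weight μ r σ ≤ (cc.b⁻¹ ^ r) ^ σ.length := by
  have := hμ.1
  calc cc.weight μ r σ ≤ 1 * cc.φnorm σ ^ r :=
        mul_le_mul_of_nonneg_right (ENNReal.toReal_le_of_le_ofReal zero_le_one
          (by simpa using prob_le_one)) (Real.rpow_nonneg (φnorm_pos σ).le r)
    _ ≤ (cc.b⁻¹ ^ σ.length) ^ r := by
        rw [one_mul]
        exact Real.rpow_le_rpow (φnorm_pos σ).le (φnorm_le_pow σ) hr
    _ = (cc.b⁻¹ ^ r) ^ σ.length := by
        rw [← Real.rpow_natCast, ← Real.rpow_natCast, ← Real.rpow_mul (inv_nonneg.2 b_pos.le),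
          ← Real.rpow_mul (inv_nonneg.2 b_pos.le), mul_comm]

end IsGibbsLike

lemma infDist_rpow_le_sum_indicator (hr : 0 ≤ r) {m : ℕ} (hm : 1 ≤ m)
    {Γ : Finset (List (Fin cc.N))}
    (hcover : ∀ τ ∈ wordsOfLength (Fin cc.N) m, ∃ σ ∈ Γ, σ <+: τ) {x : ℝ} (hx : x ∈ cc.E) :
    infDist x (Γ.image fun σ => cc.wordMap σ 0 : Set ℝ) ^ r ≤
      ∑ σ ∈ Γ, (cc.Jc σ).indicator (fun _ => cc.diamJ σ ^ r) x := by
  obtain ⟨τ, hτ, hxτ⟩ := mem_iUnion₂.1 (E_subset_iUnion_Jc hm hx)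
  obtain ⟨σ, hσ, hpre⟩ := hcover τ hτ
  have hxσ : x ∈ cc.Jc σ := Jc_subset_of_prefix hpre hxτ
  have h0 : cc.wordMap σ 0 ∈ cc.Jc σ := mem_image_of_mem _ (left_mem_Icc.2 zero_le_one)
  calc infDist x (Γ.image fun σ => cc.wordMap σ 0 : Set ℝ) ^ r ≤ cc.diamJ σ ^ r :=
        Real.rpow_le_rpow infDist_nonneg ((infDist_le_dist_of_mem (Finset.mem_coe.2
          (Finset.mem_image_of_mem _ hσ))).trans
          (dist_le_diam_of_mem (isCompact_Jc σ).isBounded hxσ h0)) hr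
    _ = (cc.Jc σ).indicator (fun _ => cc.diamJ σ ^ r) x :=
        (indicator_of_mem hxσ fun _ => cc.diamJ σ ^ r).symm
    _ ≤ ∑ σ ∈ Γ, (cc.Jc σ).indicator (fun _ => cc.diamJ σ ^ r) x :=
        Finset.single_le_sum (f := fun σ => (cc.Jc σ).indicator (fun _ => cc.diamJ σ ^ r) x)
          (fun τ _ => indicator_nonneg (fun _ _ => Real.rpow_nonneg diam_nonneg r) x) hσ

lemma Vnr_le_sum_of_covers [IsFiniteMeasure μ] (hE : μ cc.Eᶜ = 0) (hr : 0 ≤ r) {m : ℕ}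
    (hm : 1 ≤ m) {Γ : Finset (List (Fin cc.N))} (hΓ : Γ.Nonempty)
    (hcover : ∀ τ ∈ wordsOfLength (Fin cc.N) m, ∃ σ ∈ Γ, σ <+: τ) {n : ℕ} (hn : Γ.card ≤ n) :
    Vnr μ n r ≤ ∑ σ ∈ Γ, (μ (cc.Jc σ)).toReal * cc.diamJ σ ^ r := by
  set A := Γ.image fun σ => cc.wordMap σ 0
  have hmeas : ∀ σ, MeasurableSet (cc.Jc σ) := fun σ => (isCompact_Jc σ).isClosed.measurableSet
  have hG : Integrable (fun x => ∑ σ ∈ Γ, (cc.Jc σ).indicator (fun _ => cc.diamJ σ ^ r) x) μ :=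
    integrable_finsetSum _ fun σ _ => (integrable_const _).indicator (hmeas σ)
  have hle : ∀ᵐ x ∂μ, infDist x (A : Set ℝ) ^ r ≤
      ∑ σ ∈ Γ, (cc.Jc σ).indicator (fun _ => cc.diamJ σ ^ r) x :=
    measure_mono_null (fun x hx hxE => hx (infDist_rpow_le_sum_indicator hr hm hcover hxE)) hE
  have hF : Integrable (fun x => infDist x (A : Set ℝ) ^ r) μ :=
    hG.mono' ((continuous_infDist_pt _).rpow_const fun _ => Or.inr hr).aestronglyMeasurable
      (hle.mono fun x hx => by
        rwa [Real.norm_eq_abs, abs_of_nonneg (Real.rpow_nonneg infDist_nonneg r)])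
  calc Vnr μ n r ≤ ∫ x, infDist x (A : Set ℝ) ^ r ∂μ :=
        csInf_le ⟨0, forall_mem_image.2 fun _ _ =>
          integral_nonneg fun _ => Real.rpow_nonneg infDist_nonneg r⟩
          ⟨A, ⟨hΓ.image _, Finset.card_image_le.trans hn⟩, rfl⟩
    _ ≤ ∫ x, ∑ σ ∈ Γ, (cc.Jc σ).indicator (fun _ => cc.diamJ σ ^ r) x ∂μ :=
        integral_mono_ae hF hG hle
    _ = ∑ σ ∈ Γ, (μ (cc.Jc σ)).toReal * cc.diamJ σ ^ r := by
        rw [integral_finsetSum _ fun σ _ => (integrable_const _).indicator (hmeas σ)]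
        simp only [integral_indicator_const _ (hmeas _), smul_eq_mul, measureReal_def]

lemma IsGibbsLike.exists_weight_lt (hμ : cc.IsGibbsLike μ h) (hr : 0 < r) {ε : ℝ} (hε : 0 < ε) :
    ∃ m ≥ 1, ∀ τ ∈ wordsOfLength (Fin cc.N) m, cc.weight μ r τ < ε := by
  have hθ0 : 0 ≤ cc.b⁻¹ ^ r := Real.rpow_nonneg (inv_nonneg.2 b_pos.le) r
  have hθ1 : cc.b⁻¹ ^ r < 1 :=
    Real.rpow_lt_one (inv_nonneg.2 b_pos.le) (inv_lt_one_of_one_lt₀ cc.hb1) hr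
  obtain ⟨m, hm⟩ := exists_pow_lt_of_lt_one hε hθ1
  refine ⟨m + 1, Nat.le_add_left 1 m, fun τ hτ => ?_⟩
  calc cc.weight μ r τ ≤ (cc.b⁻¹ ^ r) ^ (m + 1) := mem_wordsOfLength.1 hτ ▸ hμ.weight_le hr.le τ
    _ ≤ (cc.b⁻¹ ^ r) ^ m := pow_le_pow_of_le_one hθ0 hθ1.le (Nat.le_succ m)
    _ < ε := hm

theorem IsGibbsLike.exists_Vnr_le (hμ : cc.IsGibbsLike μ h) (hh : 0 ≤ h) (hr : 0 < r) {s : ℝ}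
    (hs : 0 < s)
    (hlim : Tendsto (fun k : ℕ => 1 / (k : ℝ) *
      Real.log (∑ v : Fin k → Fin cc.N, cc.weight μ r (List.ofFn v) ^ s)) atTop (𝓝 0)) :
    ∃ C > 0, ∀ ε ∈ Ioc (0 : ℝ) 1, ∀ n : ℕ, C ≤ n * ε ^ s → Vnr μ n r ≤ n * ε := by
  have : IsProbabilityMeasure μ := hμ.1
  have : Nonempty (Fin cc.N) := ⟨⟨0, by linarith [cc.hN]⟩⟩
  obtain ⟨C, hC⟩ :=
    (hμ.isQuasiMultiplicative_weight hh hr.le).exists_card_firstBelowSet_mul_rpow_le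
      (hμ.weight_pos hh) hμ.weight_nil hs hlim
  refine ⟨max C 1, by positivity, fun ε hε n hn => ?_⟩
  obtain ⟨m, hm, hsmall⟩ := hμ.exists_weight_lt hr hε.1
  set Γ := firstBelowSet (cc.weight μ r) ε m
  have hcover : ∀ τ ∈ wordsOfLength (Fin cc.N) m, ∃ σ ∈ Γ, σ <+: τ := fun τ hτ =>
    exists_prefix_mem_firstBelowSet (mem_wordsOfLength.1 hτ) (hsmall τ hτ)
  have hΓ : Γ.Nonempty :=
    let ⟨σ, hσ, _⟩ := hcover (List.replicate m (Classical.arbitrary _)) (by simp)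
    ⟨σ, hσ⟩
  have hcard : (Γ.card : ℝ) ≤ n :=
    le_of_mul_le_mul_right ((hC ε hε m).trans ((le_max_left _ _).trans hn))
      (Real.rpow_pos_of_pos hε.1 s)
  calc Vnr μ n r ≤ ∑ σ ∈ Γ, (μ (cc.Jc σ)).toReal * cc.diamJ σ ^ r :=
        Vnr_le_sum_of_covers hμ.2.1 hr.le hm hΓ hcover (by exact_mod_cast hcard)
    _ ≤ ∑ σ ∈ Γ, cc.weight μ r σ := Finset.sum_le_sum fun σ _ =>
        mul_le_mul_of_nonneg_left (Real.rpow_le_rpow diam_nonneg (diamJ_le_φnorm σ) hr.le)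
          ENNReal.toReal_nonneg
    _ ≤ Γ.card * ε := by
        simpa using Finset.sum_le_card_nsmul Γ _ ε fun σ hσ =>
          (mem_firstBelowSet.1 hσ).2.1.le
    _ ≤ n * ε := mul_le_mul_of_nonneg_right hcard hε.1.le

end CookieCutter

theorem upper_quantization_coefficient_finite_general (cc : CookieCutter)
    (h : ℝ) (hh0 : 0 < h)
    (μ : MeasureTheory.Measure ℝ) (hμ : cc.IsGibbsLike μ h) (r : ℝ) (hr : 0 < r)
    (κ : ℝ) (hκ : 0 < κ)
    (hκlim : Filter.Tendsto
      (fun n : ℕ => (1 / (n : ℝ)) * Real.log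
        (∑ σ : Fin n → Fin cc.N,
          ((μ (cc.Jc (List.ofFn σ))).toReal * cc.φnorm (List.ofFn σ) ^ r) ^ (κ / (r + κ))))
      Filter.atTop (nhds 0)) :
    ∃ C : ℝ, ∀ᶠ n : ℕ in Filter.atTop, (n : ℝ) * Vnr μ n r ^ (κ / r) ≤ C := by
  have hs : 0 < κ / (r + κ) := by positivity
  obtain ⟨C, hC, hV⟩ := hμ.exists_Vnr_le hh0.le hr hs hκlim
  refine ⟨C ^ ((r + κ) / r), (eventually_ge_atTop ⌈C⌉₊).mono fun n hn => ?_⟩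
  have hCn : C ≤ n := Nat.ceil_le.1 hn
  have hn0 : (0 : ℝ) < n := hC.trans_le hCn
  set ε := (C / n) ^ (κ / (r + κ))⁻¹
  have hεs : n * ε ^ (κ / (r + κ)) = C := by
    rw [← Real.rpow_mul (by positivity), inv_mul_cancel₀ hs.ne', Real.rpow_one]
    field_simp
  have hε : ε ∈ Set.Ioc (0 : ℝ) 1 :=
    ⟨by positivity, Real.rpow_le_one (by positivity) ((div_le_one hn0).2 hCn) (by positivity)⟩
  calc (n : ℝ) * Vnr μ n r ^ (κ / r) ≤ n * (n * ε) ^ (κ / r) := by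
        gcongr
        exacts [Vnr_nonneg μ n r, hV ε hε n hεs.ge]
    _ = C ^ ((r + κ) / r) := by rw [mul_mul_rpow_eq hn0.le hε.1.le hr hκ, hεs]

theorem upper_quantization_coefficient_finite (cc : CookieCutter) (Q : ℝ → ℝ)
    (hQ : ∀ t : ℝ, Filter.Tendsto
      (fun k : ℕ => (1 / (k : ℝ)) * Real.log
        (∑ σ : Fin k → Fin cc.N, cc.φnorm (List.ofFn σ) ^ t))
      Filter.atTop (nhds (Q t)))
    (h : ℝ) (hh0 : 0 < h) (hQh : Q h = 0)
    (μ : MeasureTheory.Measure ℝ) (hμ : cc.IsGibbsLike μ h) (r : ℝ) (hr : 0 < r)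
    (κ : ℝ) (hκ : 0 < κ)
    (hκlim : Filter.Tendsto
      (fun n : ℕ => (1 / (n : ℝ)) * Real.log
        (∑ σ : Fin n → Fin cc.N,
          ((μ (cc.Jc (List.ofFn σ))).toReal * cc.φnorm (List.ofFn σ) ^ r) ^ (κ / (r + κ))))
      Filter.atTop (nhds 0)) :
    ∃ C : ℝ, ∀ᶠ n : ℕ in Filter.atTop, (n : ℝ) * Vnr μ n r ^ (κ / r) ≤ C :=
  upper_quantization_coefficient_finite_general cc h hh0 μ hμ r hr κ hκ hκlim
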